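/- Let V = V₁ ⊕ V₂ be a direct sum decomposition of ℝ^d into linear subspaces, let P ⊆ ℝ^d be a compact convex set, and let Λ₁ ⊆ V₁ be a lattice of full rank in V₁. If the set P + Λ₁ is convex, then P + Λ₁ = V₁ + π(P), where π : ℝ^d → V₂ is the projection along V₁. -/

import Mathlib

/-!
The convex hull of an additive subgroup `Λ` is again an additive subgroup (it is closed under
negation, and under addition because `conv Λ + conv Λ = conv (Λ + Λ)`), and a convex additive
subgroup is closed under every real scaling `c = ⌊c⌋ + fract c`; so `conv Λ = span Λ = V₁`.
Convexity of `P + Λ` then gives `P + V₁ = P + conv Λ ⊆ conv (P + Λ) = P + Λ`, while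
`V₁ + π(P) = V₁ + P` because `p - π p ∈ V₁`.
-/

open Pointwise

section ConvexHullAddSubgroup

variable {E : Type*} [AddCommGroup E] [Module ℝ E]

theorem AddSubgroup.smul_mem_of_convex (S : AddSubgroup E) (hS : Convex ℝ (S : Set E))
    (c : ℝ) {x : E} (hx : x ∈ S) : c • x ∈ S := by
  rw [← Int.floor_add_fract c, add_smul, Int.cast_smul_eq_zsmul]
  exact S.add_mem (S.zsmul_mem hx _) <|
    hS.smul_mem_of_zero_mem S.zero_mem hx ⟨Int.fract_nonneg c, (Int.fract_lt_one c).le⟩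

def AddSubgroup.toSubmoduleOfConvex (S : AddSubgroup E) (hS : Convex ℝ (S : Set E)) :
    Submodule ℝ E :=
  { S with smul_mem' := fun c _ hx => S.smul_mem_of_convex hS c hx }

def convexHullAddSubgroup (Λ : AddSubgroup E) : AddSubgroup E where
  carrier := convexHull ℝ (Λ : Set E)
  add_mem' hx hy := by
    have hΛ : (Λ : Set E) + Λ = Λ := Λ.toAddSubmonoid.coe_add_self_eq
    rw [← hΛ, convexHull_add]
    exact Set.add_mem_add hx hy
  zero_mem' := subset_convexHull ℝ _ Λ.zero_mem
  neg_mem' hx := by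
    rw [← Set.mem_neg, ← convexHull_neg, neg_coe_set]
    exact hx

theorem AddSubgroup.convexHull_eq_span (Λ : AddSubgroup E) :
    convexHull ℝ (Λ : Set E) = Submodule.span ℝ (Λ : Set E) :=
  (convexHull_min Submodule.subset_span (Submodule.convex _)).antisymm <|
    (Submodule.span_le (p := (convexHullAddSubgroup Λ).toSubmoduleOfConvex
      (convex_convexHull ℝ _))).2 (subset_convexHull ℝ _)

theorem Convex.add_span_eq {P : Set E} {Λ : AddSubgroup E} (h : Convex ℝ (P + (Λ : Set E))) :
    P + Submodule.span ℝ (Λ : Set E) = P + Λ := by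
  refine subset_antisymm ?_ (Set.add_subset_add_left Submodule.subset_span)
  calc P + Submodule.span ℝ (Λ : Set E) = P + convexHull ℝ (Λ : Set E) := by
        rw [Λ.convexHull_eq_span]
    _ ⊆ convexHull ℝ P + convexHull ℝ (Λ : Set E) :=
        Set.add_subset_add_right (subset_convexHull ℝ P)
    _ = P + (Λ : Set E) := by rw [← convexHull_add, h.convexHull_eq]

end ConvexHullAddSubgroup

theorem Submodule.coe_add_image_projection {R E : Type*} [Ring R] [AddCommGroup E] [Module R E]
    {p q : Submodule R E} (h : IsCompl p q) (s : Set E) :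
    (q : Set E) + p.projection q h '' s = q + s := by
  ext x
  constructor
  · rintro ⟨v, hv, _, ⟨y, hy, rfl⟩, rfl⟩
    refine ⟨v - q.projection p h.symm y, q.sub_mem hv (projection_apply_mem _ _), y, hy, ?_⟩
    rw [projection_eq_self_sub_projection h]
    beta_reduce
    abel
  · rintro ⟨v, hv, y, hy, rfl⟩
    refine ⟨v + q.projection p h.symm y, q.add_mem hv (projection_apply_mem _ _), _,
      ⟨y, hy, rfl⟩, ?_⟩
    rw [projection_eq_self_sub_projection h]
    beta_reduce
    abel

theorem stmt11_general (d : ℕ)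
    (V₁ V₂ : Submodule ℝ (EuclideanSpace ℝ (Fin d)))
    (hcompl : IsCompl V₂ V₁)
    (P : Set (EuclideanSpace ℝ (Fin d)))
    (Λ₁ : AddSubgroup (EuclideanSpace ℝ (Fin d)))
    (hfull : Submodule.span ℝ (Λ₁ : Set (EuclideanSpace ℝ (Fin d))) = V₁)
    (hconv : Convex ℝ (P + (Λ₁ : Set (EuclideanSpace ℝ (Fin d))))) :
    P + (Λ₁ : Set (EuclideanSpace ℝ (Fin d))) =
      (V₁ : Set (EuclideanSpace ℝ (Fin d))) +
        (fun x => ((Submodule.linearProjOfIsCompl V₂ V₁ hcompl) x :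
          EuclideanSpace ℝ (Fin d))) '' P := by
  change _ = _ + V₂.projection V₁ hcompl '' P
  rw [Submodule.coe_add_image_projection, ← hfull, add_comm _ P, hconv.add_span_eq]

/-- If `ℝ^d = V₁ ⊕ V₂`, `P` is compact convex, `Λ₁` a full-rank lattice in `V₁`,
and `P + Λ₁` is convex, then `P + Λ₁ = V₁ + π(P)` with `π` the projection onto
`V₂` along `V₁`. -/
theorem stmt11 (d : ℕ)
    (V₁ V₂ : Submodule ℝ (EuclideanSpace ℝ (Fin d)))
    (hcompl : IsCompl V₂ V₁)
    (P : Set (EuclideanSpace ℝ (Fin d)))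
    (hPc : IsCompact P) (hPconv : Convex ℝ P)
    (Λ₁ : AddSubgroup (EuclideanSpace ℝ (Fin d)))
    (hΛsub : (Λ₁ : Set (EuclideanSpace ℝ (Fin d))) ⊆ (V₁ : Set (EuclideanSpace ℝ (Fin d))))
    (hdisc : DiscreteTopology Λ₁)
    (hfull : Submodule.span ℝ (Λ₁ : Set (EuclideanSpace ℝ (Fin d))) = V₁)
    (hconv : Convex ℝ (P + (Λ₁ : Set (EuclideanSpace ℝ (Fin d))))) :
    P + (Λ₁ : Set (EuclideanSpace ℝ (Fin d))) =
      (V₁ : Set (EuclideanSpace ℝ (Fin d))) +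
        (fun x => ((Submodule.linearProjOfIsCompl V₂ V₁ hcompl) x :
          EuclideanSpace ℝ (Fin d))) '' P :=
  stmt11_general d V₁ V₂ hcompl P Λ₁ hfull hconv
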